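/- arXiv:2511.04147 — 2 statements merged into one kernel-verified Lean document; each statement's English description precedes it below -/
import Mathlib

section
/- Suppose θ_{k+1} satisfies the KKT conditions for the problem with constraint set Ē_{k+1} = E_k ∪ {y_{k+1}}: stationarity −∇J(θ_{k+1}) + Σ_{y∈Ē_{k+1}} v_{k+1}(y)∇g_y(θ_{k+1}) = 0, and the multipliers vanish except on E_{k+1} = {y ∈ Ē_{k+1} : v_{k+1}(y) > 0}, where g_y(θ_{k+1}) = d_y for y ∈ E_{k+1}. Assume also g_y(θ_k) = d_y for all y ∈ E_k. Let d = θ_{k+1} − θ_k, G_k = −J(θ_k) + J(θ_{k+1}) − ∇J(θ_{k+1})ᵀd, and T_k(y) = g_y(θ_k) − g_y(θ_{k+1}) + ∇g_y(θ_{k+1})ᵀd. Then J(θ_k) − J(θ_{k+1}) = −G_k − Σ_{y∈E_{k+1}} v_{k+1}(y) T_k(y) + v_{k+1}(y_{k+1})(g_{y_{k+1}}(θ_k) − d_{y_{k+1}}). -/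
/-! The stationarity condition, evaluated at `θ_{k+1} - θ_k`, turns the first-order term of `J`
into the multiplier-weighted first-order terms of the `g_y`. Complementary slackness lets the
sums over the active set `E_{k+1}` and over `Ē_{k+1}` agree, and since every constraint of `E_k`
is tight at `θ_k`, only the violation of the new constraint `y_{k+1}` survives. -/

open Finset

theorem ContinuousLinearMap.apply_eq_sum_of_neg_add_sum_smul_eq_zero {ι E : Type*}
    [AddCommGroup E] [Module ℝ E] [TopologicalSpace E] {L : E →L[ℝ] ℝ} {s : Finset ι}
    {v : ι → ℝ} {M : ι → E →L[ℝ] ℝ} (h : -L + ∑ i ∈ s, v i • M i = 0) (x : E) :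
    L x = ∑ i ∈ s, v i * M i x := by
  rw [neg_add_eq_zero.mp h, _root_.sum_apply]
  rfl

theorem Finset.sum_filter_pos_mul_eq {ι : Type*} {s : Finset ι} {v f : ι → ℝ}
    (hv : ∀ i ∈ s, 0 ≤ v i) : ∑ i ∈ s with 0 < v i, v i * f i = ∑ i ∈ s, v i * f i :=
  sum_filter_of_ne fun i hi hne =>
    (hv i hi).lt_of_ne fun h0 => hne (by rw [← h0, zero_mul])

theorem stmt_4_general {p : ℕ} {Y : Type*} [DecidableEq Y]
    (J : EuclideanSpace ℝ (Fin p) → ℝ)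
    (g : Y → EuclideanSpace ℝ (Fin p) → ℝ) (dth : Y → ℝ)
    (Ek Ebar Ek1 : Finset Y) (yk1 : Y)
    (hEbar : Ebar = insert yk1 Ek)
    (θk θk1 : EuclideanSpace ℝ (Fin p)) (vk1 : Y → ℝ)
    (hdual : ∀ y ∈ Ebar, 0 ≤ vk1 y)
    (hEk1 : ∀ y, y ∈ Ek1 ↔ y ∈ Ebar ∧ 0 < vk1 y)
    (hact : ∀ y ∈ Ek1, g y θk1 = dth y)
    (hactk : ∀ y ∈ Ek, g y θk = dth y)
    (hstat : -fderiv ℝ J θk1 + ∑ y ∈ Ebar, vk1 y • fderiv ℝ (g y) θk1 = 0) :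
    J θk - J θk1 =
      -(-J θk + J θk1 - fderiv ℝ J θk1 (θk1 - θk)) -
      (∑ y ∈ Ek1, vk1 y * (g y θk - g y θk1 + fderiv ℝ (g y) θk1 (θk1 - θk))) +
      vk1 yk1 * (g yk1 θk - dth yk1) := by
  have hEk1_eq : Ek1 = {y ∈ Ebar | 0 < vk1 y} := by
    ext y
    rw [hEk1, mem_filter]
  have sum_active (f : Y → ℝ) : ∑ y ∈ Ek1, vk1 y * f y = ∑ y ∈ Ebar, vk1 y * f y := by
    rw [hEk1_eq, sum_filter_pos_mul_eq hdual]
  have first_order := ContinuousLinearMap.apply_eq_sum_of_neg_add_sum_smul_eq_zero hstat (θk1 - θk)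
  have violation : ∑ y ∈ Ebar, vk1 y * (g y θk - dth y) = vk1 yk1 * (g yk1 θk - dth yk1) := by
    rw [hEbar]
    exact sum_eq_single_of_mem _ (mem_insert_self _ _) fun y hy hne => by
      rw [hactk y (mem_of_mem_insert_of_ne hy hne), sub_self, mul_zero]
  have split : ∑ y ∈ Ek1, vk1 y * (g y θk - g y θk1 + fderiv ℝ (g y) θk1 (θk1 - θk)) =
      ∑ y ∈ Ek1, vk1 y * (g y θk - dth y) + ∑ y ∈ Ek1, vk1 y * fderiv ℝ (g y) θk1 (θk1 - θk) := by
    rw [← sum_add_distrib]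
    exact sum_congr rfl fun y hy => by rw [hact y hy]; ring
  rw [split, sum_active, sum_active, violation, ← first_order]
  ring

/-- Second identity of Lemma 2: the incremental change of the objective value in terms of
the Taylor remainders `G_k`, `T_k(y)` at the next iterate and the violation at `y_{k+1}`. -/
theorem stmt_4 {p : ℕ} {Y : Type*} [DecidableEq Y]
    (J : EuclideanSpace ℝ (Fin p) → ℝ)
    (g : Y → EuclideanSpace ℝ (Fin p) → ℝ) (dth : Y → ℝ)
    (hJ : Differentiable ℝ J) (hg : ∀ y, Differentiable ℝ (g y))
    (Ek Ebar Ek1 : Finset Y) (yk1 : Y) (hnew : yk1 ∉ Ek)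
    (hEbar : Ebar = insert yk1 Ek)
    (θk θk1 : EuclideanSpace ℝ (Fin p)) (vk1 : Y → ℝ)
    (hdual : ∀ y ∈ Ebar, 0 ≤ vk1 y)
    (hEk1 : ∀ y, y ∈ Ek1 ↔ y ∈ Ebar ∧ 0 < vk1 y)
    (hact : ∀ y ∈ Ek1, g y θk1 = dth y)
    (hactk : ∀ y ∈ Ek, g y θk = dth y)
    (hstat : -fderiv ℝ J θk1 + ∑ y ∈ Ebar, vk1 y • fderiv ℝ (g y) θk1 = 0) :
    J θk - J θk1 =
      -(-J θk + J θk1 - fderiv ℝ J θk1 (θk1 - θk)) -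
      (∑ y ∈ Ek1, vk1 y * (g y θk - g y θk1 + fderiv ℝ (g y) θk1 (θk1 - θk))) +
      vk1 yk1 * (g yk1 θk - dth yk1) :=
  stmt_4_general J g dth Ek Ebar Ek1 yk1 hEbar θk θk1 vk1 hdual hEk1 hact hactk hstat
end

section
/- Under the hypotheses of the previous statement (θ_k the unique maximizer of J over F(E_k), θ_{k+1} the unique maximizer over F(Ē_{k+1}) with Ē_{k+1} = E_k ∪ {y_{k+1}}, g_{y_{k+1}}(θ_k) > d_{y_{k+1}} + η for η > 0), and additionally defining E_{k+1} = {y ∈ Ē_{k+1} : v_{k+1}(y) > 0} from KKT multipliers of θ_{k+1}, and assuming θ_{k+1} is the unique maximizer over F(E_{k+1}): if E_{k+1} ⊆ E_k then a contradiction follows; hence y_{k+1} ∈ E_{k+1}, i.e., v_{k+1}(y_{k+1}) > 0. -/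
/-! Adding the violated constraint `y_{k+1}` strictly lowers the optimal value: `θ_{k+1}` is
feasible for `E_k`, and it cannot be the unique maximizer `θ_k` because `θ_k` violates the new
constraint. If `y_{k+1}` had multiplier `0`, then `E_{k+1} ⊆ E_k`, so `θ_k` would be feasible for
`E_{k+1}` and `J(θ_k) ≤ J(θ_{k+1})`, contradicting that strict decrease. -/

section ConstraintSet

variable {X Y : Type*}

def constraintSet (g : Y → X → ℝ) (d : Y → ℝ) (S : Set Y) : Set X :=
  {θ | ∀ y ∈ S, g y θ ≤ d y}

theorem constraintSet_anti {g : Y → X → ℝ} {d : Y → ℝ} {S T : Set Y} (h : S ⊆ T) :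
    constraintSet g d T ⊆ constraintSet g d S :=
  fun _ hθ y hy => hθ y (h hy)

theorem IsMaxOn.lt_of_unique {β : Type*} [LinearOrder β] {J : X → β} {s : Set X} {a b : X}
    (hmax : IsMaxOn J s a) (huniq : ∀ x ∈ s, J x = J a → x = a) (hb : b ∈ s) (hne : b ≠ a) :
    J b < J a :=
  (hmax hb).lt_of_ne fun h => hne (huniq b hb h)

theorem lt_of_isMaxOn_constraintSet_union_singleton {g : Y → X → ℝ} {d : Y → ℝ} {J : X → ℝ}
    {E : Set Y} {y : Y} {θ θ' : X} (hmax : IsMaxOn J (constraintSet g d E) θ)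
    (huniq : ∀ x ∈ constraintSet g d E, J x = J θ → x = θ) (hviol : d y < g y θ)
    (hθ' : θ' ∈ constraintSet g d (E ∪ {y})) :
    J θ' < J θ := by
  have hθ'E : θ' ∈ constraintSet g d E := constraintSet_anti Set.subset_union_left hθ'
  refine hmax.lt_of_unique huniq hθ'E ?_
  rintro rfl
  exact (hθ' y (Or.inr rfl)).not_gt hviol

end ConstraintSet

theorem Set.sep_union_singleton_subset {α : Type*} {s : Set α} {a : α} {P : α → Prop}
    (ha : ¬ P a) : {y ∈ s ∪ {a} | P y} ⊆ s := by
  rintro y ⟨hy | rfl, hPy⟩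
  exacts [hy, absurd hPy ha]

theorem stmt_6_general {p : ℕ} {Y : Type*} (J : EuclideanSpace ℝ (Fin p) → ℝ)
    (g : Y → EuclideanSpace ℝ (Fin p) → ℝ) (d : Y → ℝ)
    (F : Set Y → Set (EuclideanSpace ℝ (Fin p)))
    (hF : ∀ S, F S = {θ | ∀ y ∈ S, g y θ ≤ d y})
    (Ek Ek1 : Set Y) (yk1 : Y) (η : ℝ) (hη : 0 < η)
    (θk θk1 : EuclideanSpace ℝ (Fin p)) (vk1 : Y → ℝ)
    (hθk : θk ∈ F Ek) (hθkmax : ∀ θ ∈ F Ek, J θ ≤ J θk)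
    (hθkuniq : ∀ θ ∈ F Ek, J θ = J θk → θ = θk)
    (hθk1 : θk1 ∈ F (Ek ∪ {yk1}))
    (hviol : g yk1 θk > d yk1 + η)
    (hEk1 : Ek1 = {y ∈ Ek ∪ {yk1} | 0 < vk1 y})
    (hθk1max' : ∀ θ ∈ F Ek1, J θ ≤ J θk1) :
    yk1 ∈ Ek1 := by
  obtain rfl : F = constraintSet g d := funext hF
  have hdecrease : J θk1 < J θk :=
    lt_of_isMaxOn_constraintSet_union_singleton hθkmax hθkuniq (by linarith) hθk1
  by_contra hnot
  have hsub : Ek1 ⊆ Ek := by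
    subst hEk1
    exact Set.sep_union_singleton_subset fun hv => hnot ⟨Or.inr rfl, hv⟩
  exact (hθk1max' θk (constraintSet_anti hsub hθk)).not_gt hdecrease

/-- Lemma 3, second part: under the hypotheses of the strict-decrease lemma, with
`E_{k+1} = {y ∈ Ē_{k+1} : v_{k+1}(y) > 0}` obtained from the KKT multipliers of `θ_{k+1}`
and `θ_{k+1}` the unique maximizer over `F(E_{k+1})`, the new point `y_{k+1}` belongs to
`E_{k+1}`, i.e. `v_{k+1}(y_{k+1}) > 0`. -/
theorem stmt_6 {p : ℕ} {Y : Type*} (J : EuclideanSpace ℝ (Fin p) → ℝ)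
    (g : Y → EuclideanSpace ℝ (Fin p) → ℝ) (d : Y → ℝ)
    (F : Set Y → Set (EuclideanSpace ℝ (Fin p)))
    (hF : ∀ S, F S = {θ | ∀ y ∈ S, g y θ ≤ d y})
    (Ek Ek1 : Set Y) (yk1 : Y) (η : ℝ) (hη : 0 < η)
    (θk θk1 : EuclideanSpace ℝ (Fin p)) (vk1 : Y → ℝ)
    (hθk : θk ∈ F Ek) (hθkmax : ∀ θ ∈ F Ek, J θ ≤ J θk)
    (hθkuniq : ∀ θ ∈ F Ek, J θ = J θk → θ = θk)
    (hθk1 : θk1 ∈ F (Ek ∪ {yk1})) (hθk1max : ∀ θ ∈ F (Ek ∪ {yk1}), J θ ≤ J θk1)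
    (hθk1uniq : ∀ θ ∈ F (Ek ∪ {yk1}), J θ = J θk1 → θ = θk1)
    (hviol : g yk1 θk > d yk1 + η)
    (hEk1 : Ek1 = {y ∈ Ek ∪ {yk1} | 0 < vk1 y})
    (hθk1' : θk1 ∈ F Ek1) (hθk1max' : ∀ θ ∈ F Ek1, J θ ≤ J θk1)
    (hθk1uniq' : ∀ θ ∈ F Ek1, J θ = J θk1 → θ = θk1) :
    yk1 ∈ Ek1 :=
  stmt_6_general J g d F hF Ek Ek1 yk1 η hη θk θk1 vk1 hθk hθkmax hθkuniq hθk1 hviol hEk1 hθk1max'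
end
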